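/- arXiv:0904.1678 — 6 statements merged into one kernel-verified Lean document; each statement's English description precedes it below -/
import Mathlib

section
/- Every single-based equational class of F-algebras is a naturally single-induced class. Precisely: let e : F_n X → E be a regular epimorphism arising as the coequalizer of a parallel pair φ₀, ψ₀ : Q ⇉ F_n X. Define G = (− • Q) ∘ hom(X, −) (copower of Q indexed by hom(X,−)) and natural transformations φ, ψ : G → F_n with components φ_A : hom(X,A) • Q → F_n A determined on the f-labeled coproduct injection u_f by φ_A ∘ u_f = F_n f ∘ φ₀ (and similarly ψ_A ∘ u_f = F_n f ∘ ψ₀). Then an F-algebra (A, α) satisfies the equation arrow e (i.e., for every f : X → A there is h : E → A with ε_{n,(A,α)} ∘ F_n f = h ∘ e) if and only if (A, α) satisfies the natural identity (φ, ψ) (i.e., ε_{n,(A,α)} ∘ φ_A = ε_{n,(A,α)} ∘ ψ_A). -/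
/-! Both conditions say that `εₙ ∘ Fₙ f` coequalizes `φ₀, ψ₀` for every `f : X ⟶ A`: the
first because `e` is the coequalizer of `φ₀, ψ₀`, the second because the injections `u_f`
are jointly epimorphic and `φ_A ∘ u_f = Fₙ f ∘ φ₀`, `ψ_A ∘ u_f = Fₙ f ∘ ψ₀`. -/

open CategoryTheory CategoryTheory.Limits

universe v u

/-- The free-algebra (term functor) construction for an endofunctor `F` on a cocomplete
category: term functors `Fo n` for each ordinal `n`, connecting natural transformations
`w`, coproduct injections `q n : F ∘ Fₙ ⟶ F_{n+1}` and `ι n : Id ⟶ Fₙ`, where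
`F₀ = Id` (up to iso, witnessed by `ι 0` being invertible), `F_{n+1} = F Fₙ + Id`
(witnessed by the binary-coproduct universal property), and `Fₗ = colim_{m<l} F_m` at
limit ordinals (witnessed by the hand-rolled colimit universal property). -/
structure TermConstruction {C : Type u} [Category.{v} C] (F : C ⥤ C) where
  Fo : Ordinal.{v} → C ⥤ C
  w : ∀ {m n : Ordinal.{v}}, m ≤ n → (Fo m ⟶ Fo n)
  q : ∀ n : Ordinal.{v}, Fo n ⋙ F ⟶ Fo (n + 1)
  ι : ∀ n : Ordinal.{v}, 𝟭 C ⟶ Fo n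
  iso0 : IsIso (ι 0)
  w_refl : ∀ n : Ordinal.{v}, w (le_refl n) = 𝟙 (Fo n)
  w_trans : ∀ {m n p : Ordinal.{v}} (h₁ : m ≤ n) (h₂ : n ≤ p), w h₁ ≫ w h₂ = w (h₁.trans h₂)
  ι_w : ∀ {m n : Ordinal.{v}} (h : m ≤ n), ι m ≫ w h = ι n
  q_w : ∀ {m n : Ordinal.{v}} (h : m ≤ n),
      Functor.whiskerRight (w h) F ≫ q n = q m ≫ w (add_le_add_left h 1)
  succ_isColimit : ∀ (n : Ordinal.{v}) (A : C),
      Nonempty (IsColimit (BinaryCofan.mk ((q n).app A) ((ι (n + 1)).app A)))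
  limit_exists_unique : ∀ (n : Ordinal.{v}), Order.IsSuccLimit n → ∀ (A X : C)
      (g : ∀ m : Ordinal.{v}, m < n → ((Fo m).obj A ⟶ X)),
      (∀ (m m' : Ordinal.{v}) (h : m ≤ m') (h' : m' < n),
        (w h).app A ≫ g m' h' = g m (lt_of_le_of_lt h h')) →
      ∃! k : (Fo n).obj A ⟶ X,
        ∀ (m : Ordinal.{v}) (h : m < n), (w h.le).app A ≫ k = g m h

/-- The term-evaluations `ε n : Fₙ A ⟶ A` of an `F`-algebra `(A, α)`, defined recursively by
`ε 0 = id` (transported along `ι 0`), `ε (n+1) = [α ∘ F (ε n), id]` and colimits at limit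
ordinals. -/
structure TermEval {C : Type u} [Category.{v} C] (F : C ⥤ C) (T : TermConstruction F)
    (A : C) (α : F.obj A ⟶ A) where
  ε : ∀ n : Ordinal.{v}, (T.Fo n).obj A ⟶ A
  ε_zero : (T.ι 0).app A ≫ ε 0 = 𝟙 A
  ε_succ_q : ∀ n : Ordinal.{v}, (T.q n).app A ≫ ε (n + 1) = F.map (ε n) ≫ α
  ε_succ_ι : ∀ n : Ordinal.{v}, (T.ι (n + 1)).app A ≫ ε (n + 1) = 𝟙 A
  ε_limit : ∀ (n : Ordinal.{v}), Order.IsSuccLimit n →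
      ∀ (m : Ordinal.{v}) (h : m < n), (T.w h.le).app A ≫ ε n = ε m

section

variable {C : Type u} [Category.{v} C]

lemma exists_eq_comp_iff_of_coequalizes {Q P E₀ Y : C} {φ₀ ψ₀ : Q ⟶ P} {e : P ⟶ E₀}
    (he : φ₀ ≫ e = ψ₀ ≫ e) (hdesc : ∀ k : P ⟶ Y, φ₀ ≫ k = ψ₀ ≫ k → ∃ h : E₀ ⟶ Y, e ≫ h = k)
    (k : P ⟶ Y) : (∃ h : E₀ ⟶ Y, k = e ≫ h) ↔ φ₀ ≫ k = ψ₀ ≫ k := by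
  constructor
  · rintro ⟨h, rfl⟩
    simp only [← Category.assoc, he]
  · intro hk
    obtain ⟨h, hh⟩ := hdesc k hk
    exact ⟨h, hh.symm⟩

lemma eq_of_forall_comp_eq_of_existsUnique {ι : Type*} {Q P Y : C} {u : ι → (Q ⟶ P)}
    (hu : ∀ g : ι → (Q ⟶ Y), ∃! k : P ⟶ Y, ∀ i, u i ≫ k = g i) {k₁ k₂ : P ⟶ Y} :
    (∀ i, u i ≫ k₁ = u i ≫ k₂) ↔ k₁ = k₂ :=
  ⟨fun h => (hu _).unique h fun _ => rfl, fun h _ => h ▸ rfl⟩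

end

theorem satisfies_equation_arrow_iff_satisfies_identity_general {C : Type u} [Category.{v} C]
    (F : C ⥤ C) (T : TermConstruction F) {n : Ordinal.{v}}
    (X Q E₀ : C) (φ₀ ψ₀ : Q ⟶ (T.Fo n).obj X) (e : (T.Fo n).obj X ⟶ E₀)
    (he : φ₀ ≫ e = ψ₀ ≫ e)
    (heUniv : ∀ {Y : C} (k : (T.Fo n).obj X ⟶ Y), φ₀ ≫ k = ψ₀ ≫ k →
      ∃! h : E₀ ⟶ Y, e ≫ h = k)
    (G : C ⥤ C) (u : ∀ (A : C), (X ⟶ A) → (Q ⟶ G.obj A))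
    (hG : ∀ (A Y : C) (g : (X ⟶ A) → (Q ⟶ Y)), ∃! k : G.obj A ⟶ Y, ∀ f : X ⟶ A, u A f ≫ k = g f)
    (φ ψ : G ⟶ T.Fo n)
    (hφ : ∀ (A : C) (f : X ⟶ A), u A f ≫ φ.app A = φ₀ ≫ (T.Fo n).map f)
    (hψ : ∀ (A : C) (f : X ⟶ A), u A f ≫ ψ.app A = ψ₀ ≫ (T.Fo n).map f)
    (A : C) (α : F.obj A ⟶ A) (E : TermEval F T A α) :
    (∀ f : X ⟶ A, ∃ h : E₀ ⟶ A, (T.Fo n).map f ≫ E.ε n = e ≫ h) ↔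
      (φ.app A ≫ E.ε n = ψ.app A ≫ E.ε n) := by
  have hfactor (f : X ⟶ A) := exists_eq_comp_iff_of_coequalizes he
    (fun k hk => (heUniv k hk).exists) ((T.Fo n).map f ≫ E.ε n)
  have hlabel (f : X ⟶ A) : u A f ≫ φ.app A ≫ E.ε n = u A f ≫ ψ.app A ≫ E.ε n ↔
      φ₀ ≫ (T.Fo n).map f ≫ E.ε n = ψ₀ ≫ (T.Fo n).map f ≫ E.ε n := by
    simp only [← Category.assoc, hφ, hψ]
  simp only [hfactor, ← hlabel]
  exact eq_of_forall_comp_eq_of_existsUnique (hG A A)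

/-- Every single-based equational class is naturally single-induced.  Let the equation arrow
`e : Fₙ X ⟶ E₀` be the coequalizer of a parallel pair `φ₀, ψ₀ : Q ⟶ Fₙ X`.  Let
`G = (− • Q) ∘ hom(X, −)` be the copower construction, witnessed here by a functor `G`
whose value at `A` is the coproduct of copies of `Q` indexed by `hom(X, A)` with coproduct
injections `u A f` (colimit property `hG`), and let `φ, ψ : G ⟶ Fₙ` be the natural
transformations determined on the `f`-labelled injections by `φ_A ∘ u_f = Fₙ f ∘ φ₀` and
`ψ_A ∘ u_f = Fₙ f ∘ ψ₀`.  Then an `F`-algebra `(A, α)` satisfies the equation arrow `e`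
(every `f : X ⟶ A` admits `h` with `εₙ ∘ Fₙ f = h ∘ e`) iff it satisfies the natural
identity `(φ, ψ)` (i.e. `εₙ ∘ φ_A = εₙ ∘ ψ_A`). -/
theorem satisfies_equation_arrow_iff_satisfies_identity {C : Type u} [Category.{v} C]
    [HasColimits C] (F : C ⥤ C) (T : TermConstruction F) {n : Ordinal.{v}}
    (X Q E₀ : C) (φ₀ ψ₀ : Q ⟶ (T.Fo n).obj X) (e : (T.Fo n).obj X ⟶ E₀)
    (he : φ₀ ≫ e = ψ₀ ≫ e)
    (heUniv : ∀ {Y : C} (k : (T.Fo n).obj X ⟶ Y), φ₀ ≫ k = ψ₀ ≫ k →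
      ∃! h : E₀ ⟶ Y, e ≫ h = k)
    (G : C ⥤ C) (u : ∀ (A : C), (X ⟶ A) → (Q ⟶ G.obj A))
    (hG : ∀ (A Y : C) (g : (X ⟶ A) → (Q ⟶ Y)), ∃! k : G.obj A ⟶ Y, ∀ f : X ⟶ A, u A f ≫ k = g f)
    (hu : ∀ {A B : C} (f : X ⟶ A) (p : A ⟶ B), u A f ≫ G.map p = u B (f ≫ p))
    (φ ψ : G ⟶ T.Fo n)
    (hφ : ∀ (A : C) (f : X ⟶ A), u A f ≫ φ.app A = φ₀ ≫ (T.Fo n).map f)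
    (hψ : ∀ (A : C) (f : X ⟶ A), u A f ≫ ψ.app A = ψ₀ ≫ (T.Fo n).map f)
    (A : C) (α : F.obj A ⟶ A) (E : TermEval F T A α) :
    (∀ f : X ⟶ A, ∃ h : E₀ ⟶ A, (T.Fo n).map f ≫ E.ε n = e ≫ h) ↔
      (φ.app A ≫ E.ε n = ψ.app A ≫ E.ε n) :=
  satisfies_equation_arrow_iff_satisfies_identity_general F T X Q E₀ φ₀ ψ₀ e he heUniv G u hG φ ψ hφ
    hψ A α E
end

section
/- Every naturally single-induced class is equational. Precisely: let G be an endofunctor on a cocomplete category C and (φ, ψ) an n-ary G-identity with φ, ψ : G → F_n. Let (E, e) be the coequalizer of φ and ψ in the functor category, so each e_X : F_n X → E X is a regular epimorphism (coequalizer of φ_X, ψ_X, since colimits of functors are computed componentwise). Then an F-algebra (A, α) satisfies the identity (φ, ψ) if and only if it satisfies every equation arrow e_X for X an object of C. -/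
open CategoryTheory CategoryTheory.Limits

universe v u

namespace CategoryTheory.NatTrans

variable {C : Type u} [Category.{v} C] {D : Type*} [Category D] {G H : C ⥤ D} (φ ψ : G ⟶ H)

lemma app_comp_map_comp_eq_of_app_comp_eq {A : C} {Y : D} {k : H.obj A ⟶ Y}
    (hk : φ.app A ≫ k = ψ.app A ≫ k) {X : C} (f : X ⟶ A) :
    φ.app X ≫ H.map f ≫ k = ψ.app X ≫ H.map f ≫ k := by
  rw [← Category.assoc, ← φ.naturality, Category.assoc, hk, ← Category.assoc, ψ.naturality,
    Category.assoc]

lemma app_comp_eq_of_factors_through {E : C ⥤ D} {e : H ⟶ E} (he : φ ≫ e = ψ ≫ e) {A : C}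
    {Y : D} {k : H.obj A ⟶ Y} {h : E.obj A ⟶ Y} (hk : k = e.app A ≫ h) :
    φ.app A ≫ k = ψ.app A ≫ k := by
  rw [hk, ← Category.assoc, ← NatTrans.comp_app, he, NatTrans.comp_app, Category.assoc]

end CategoryTheory.NatTrans

theorem satisfies_identity_iff_satisfies_all_equation_arrows_general {C : Type u} [Category.{v} C]
    (F : C ⥤ C) (T : TermConstruction F) {n : Ordinal.{v}}
    (G : C ⥤ C) (φ ψ : G ⟶ T.Fo n) (E₀ : C ⥤ C) (e : T.Fo n ⟶ E₀)
    (he : φ ≫ e = ψ ≫ e)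
    (heUniv : ∀ (X : C) {Y : C} (k : (T.Fo n).obj X ⟶ Y), φ.app X ≫ k = ψ.app X ≫ k →
      ∃! h : E₀.obj X ⟶ Y, e.app X ≫ h = k)
    (A : C) (α : F.obj A ⟶ A) (E : TermEval F T A α) :
    (φ.app A ≫ E.ε n = ψ.app A ≫ E.ε n) ↔
      (∀ (X : C) (f : X ⟶ A), ∃ h : E₀.obj X ⟶ A, (T.Fo n).map f ≫ E.ε n = e.app X ≫ h) := by
  constructor
  · intro hid X f
    obtain ⟨h, hh, -⟩ :=
      heUniv X _ (NatTrans.app_comp_map_comp_eq_of_app_comp_eq φ ψ hid f)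
    exact ⟨h, hh.symm⟩
  · intro hall
    obtain ⟨h, hh⟩ := hall A (𝟙 A)
    rw [(T.Fo n).map_id, Category.id_comp] at hh
    exact NatTrans.app_comp_eq_of_factors_through φ ψ he hh

/-- Every naturally single-induced class is equational.  Let `(φ, ψ)` be an `n`-ary
`G`-identity, `φ, ψ : G ⟶ Fₙ`, and let `e : Fₙ ⟶ E₀` be the coequalizer of `φ` and `ψ` in
the functor category; since colimits of functors are computed componentwise, each component
`e_X : Fₙ X ⟶ E₀ X` is a coequalizer (regular epimorphism) of `(φ_X, ψ_X)`, witnessed by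
`he` and `heUniv`.  Then an `F`-algebra `(A, α)` satisfies the identity `(φ, ψ)` iff it
satisfies every equation arrow `e_X` for `X` an object of `C`. -/
theorem satisfies_identity_iff_satisfies_all_equation_arrows {C : Type u} [Category.{v} C]
    [HasColimits C] (F : C ⥤ C) (T : TermConstruction F) {n : Ordinal.{v}}
    (G : C ⥤ C) (φ ψ : G ⟶ T.Fo n) (E₀ : C ⥤ C) (e : T.Fo n ⟶ E₀)
    (he : φ ≫ e = ψ ≫ e)
    (heUniv : ∀ (X : C) {Y : C} (k : (T.Fo n).obj X ⟶ Y), φ.app X ≫ k = ψ.app X ≫ k →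
      ∃! h : E₀.obj X ⟶ Y, e.app X ≫ h = k)
    (A : C) (α : F.obj A ⟶ A) (E : TermEval F T A α) :
    (φ.app A ≫ E.ε n = ψ.app A ≫ E.ε n) ↔
      (∀ (X : C) (f : X ⟶ A), ∃ h : E₀.obj X ⟶ A, (T.Fo n).map f ≫ E.ε n = e.app X ≫ h) :=
  satisfies_identity_iff_satisfies_all_equation_arrows_general F T G φ ψ E₀ e he heUniv A α E
end

section
/- For an endofunctor F on a cocomplete category, the equational classes of F-algebras coincide with the naturally induced classes of F-algebras: a full subcategory of Alg F is of the form Alg(F, E) for a class E of equation arrows if and only if it is of the form Alg(F, I) for a class I of natural identities. -/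
open CategoryTheory CategoryTheory.Limits

universe v u

variable {C : Type u} [Category.{v} C]

/-- An equation arrow of arity `n` over the variable-object `X`: a regular epimorphism
`e : Fₙ X ⟶ tgt`. -/
structure EqArrow {F : C ⥤ C} (T : TermConstruction F) where
  n : Ordinal.{v}
  X : C
  tgt : C
  e : (T.Fo n).obj X ⟶ tgt
  regEpi : RegularEpi e

/-- A natural identity: a pair of natural terms `φ : G ⟶ F_{m}`, `ψ : G ⟶ F_{m'}` with common
domain `G`. -/
structure NatIdentity {F : C ⥤ C} (T : TermConstruction F) where
  G : C ⥤ C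
  m : Ordinal.{v}
  m' : Ordinal.{v}
  φ : G ⟶ T.Fo m
  ψ : G ⟶ T.Fo m'

/-- Satisfaction of an equation arrow by an `F`-algebra `(A, α)` (with chosen term-evaluations
`Ev`): every `f : X ⟶ A` factors the evaluated term map through `e`. -/
def SatisfiesEqArrow {F : C ⥤ C} {T : TermConstruction F}
    (Ev : ∀ (A : C) (α : F.obj A ⟶ A), TermEval F T A α)
    (e : EqArrow T) (A : C) (α : F.obj A ⟶ A) : Prop :=
  ∀ f : e.X ⟶ A, ∃ h : e.tgt ⟶ A, (T.Fo e.n).map f ≫ (Ev A α).ε e.n = e.e ≫ h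

/-- Satisfaction of a natural identity by an `F`-algebra `(A, α)`: the two term-evaluations of
its natural terms agree. -/
def SatisfiesNatIdentity {F : C ⥤ C} {T : TermConstruction F}
    (Ev : ∀ (A : C) (α : F.obj A ⟶ A), TermEval F T A α)
    (i : NatIdentity T) (A : C) (α : F.obj A ⟶ A) : Prop :=
  i.φ.app A ≫ (Ev A α).ε i.m = i.ψ.app A ≫ (Ev A α).ε i.m'

/-!
An equation arrow `e : Fₙ X ⟶ E` is the coequalizer of its kernel pair `l, r : W ⇉ Fₙ X`, so an
algebra `A` satisfies `e` iff `l ≫ Fₙ f ≫ εₙ = r ≫ Fₙ f ≫ εₙ` for every `f : X ⟶ A`; gathering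
all `f` into `∐_{X ⟶ A} W` makes this a single natural identity. Conversely, a natural identity
`φ, ψ`, pushed to the common arity `m ⊔ m'`, gives for each `X` the coequalizer of `φ_X, ψ_X`.
Since term evaluations commute with the connecting maps `w` (transfinite induction), naturality
of `φ, ψ` shows that `A` satisfies all these equation arrows iff `φ_A ≫ ε = ψ_A ≫ ε`: one
direction is the case `X = A`, `f = 𝟙 A`.
-/

namespace TermConstruction

variable {F : C ⥤ C} (T : TermConstruction F)

lemma w_eq_id {n : Ordinal.{v}} (h : n ≤ n) : T.w h = 𝟙 (T.Fo n) :=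
  T.w_refl n

lemma w_app_comp_w_app {m n p : Ordinal.{v}} (h₁ : m ≤ n) (h₂ : n ≤ p) (A : C) :
    (T.w h₁).app A ≫ (T.w h₂).app A = (T.w (h₁.trans h₂)).app A := by
  rw [← NatTrans.comp_app, T.w_trans]

lemma ι_app_comp_w_app {m n : Ordinal.{v}} (h : m ≤ n) (A : C) :
    (T.ι m).app A ≫ (T.w h).app A = (T.ι n).app A := by
  rw [← NatTrans.comp_app, T.ι_w]

lemma q_app_comp_w_app {m n : Ordinal.{v}} (h : m ≤ n) (A : C) :
    (T.q m).app A ≫ (T.w (add_le_add_left h 1)).app A = F.map ((T.w h).app A) ≫ (T.q n).app A := by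
  simpa using (congr_app (T.q_w h) A).symm

lemma hom_ext_zero {A X : C} {k k' : (T.Fo 0).obj A ⟶ X}
    (h : (T.ι 0).app A ≫ k = (T.ι 0).app A ≫ k') : k = k' := by
  have := T.iso0
  exact (cancel_epi _).1 h

lemma hom_ext_add_one {n : Ordinal.{v}} {A X : C} {k k' : (T.Fo (n + 1)).obj A ⟶ X}
    (hq : (T.q n).app A ≫ k = (T.q n).app A ≫ k')
    (hι : (T.ι (n + 1)).app A ≫ k = (T.ι (n + 1)).app A ≫ k') : k = k' :=
  BinaryCofan.IsColimit.hom_ext (T.succ_isColimit n A).some hq hι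

lemma hom_ext_of_isSuccLimit {n : Ordinal.{v}} (hn : Order.IsSuccLimit n) {A X : C}
    {k k' : (T.Fo n).obj A ⟶ X}
    (h : ∀ (m : Ordinal.{v}) (hm : m < n), (T.w hm.le).app A ≫ k = (T.w hm.le).app A ≫ k') :
    k = k' := by
  obtain ⟨_, -, huniq⟩ := T.limit_exists_unique n hn A X (fun m hm => (T.w hm.le).app A ≫ k)
    (fun m m' hmm' _ => by rw [← Category.assoc, T.w_app_comp_w_app])
  exact (huniq k fun _ _ => rfl).trans (huniq k' fun m hm => (h m hm).symm).symm

end TermConstruction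

namespace TermEval

variable {F : C ⥤ C} {T : TermConstruction F} {A : C} {α : F.obj A ⟶ A}
  (E : TermEval F T A α)

lemma w_app_comp_ε_add_one {k : Ordinal.{v}}
    (ih : ∀ (j : Ordinal.{v}) (h : j ≤ k), (T.w h).app A ≫ E.ε k = E.ε j)
    {m : Ordinal.{v}} (h : m ≤ k + 1) : (T.w h).app A ≫ E.ε (k + 1) = E.ε m := by
  induction m using Ordinal.limitRecOn with
  | zero =>
    refine T.hom_ext_zero ?_
    rw [← Category.assoc, T.ι_app_comp_w_app, E.ε_succ_ι, E.ε_zero]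
  | add_one j _ =>
    have hjk : j ≤ k := Order.le_of_succ_le_succ h
    refine T.hom_ext_add_one ?_ ?_
    · calc (T.q j).app A ≫ (T.w h).app A ≫ E.ε (k + 1)
          = F.map ((T.w hjk).app A) ≫ (T.q k).app A ≫ E.ε (k + 1) := by
            rw [← Category.assoc, T.q_app_comp_w_app hjk, Category.assoc]
        _ = F.map ((T.w hjk).app A ≫ E.ε k) ≫ α := by
            rw [E.ε_succ_q, F.map_comp, Category.assoc]
        _ = (T.q j).app A ≫ E.ε (j + 1) := by rw [ih j hjk, E.ε_succ_q]
    · rw [← Category.assoc, T.ι_app_comp_w_app, E.ε_succ_ι, E.ε_succ_ι]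
  | limit m hm ihm =>
    refine T.hom_ext_of_isSuccLimit hm fun p hp => ?_
    rw [← Category.assoc, T.w_app_comp_w_app, ihm p hp (hp.le.trans h), E.ε_limit m hm p hp]

lemma w_app_comp_ε {m n : Ordinal.{v}} (h : m ≤ n) : (T.w h).app A ≫ E.ε n = E.ε m := by
  induction n using Ordinal.limitRecOn generalizing m with
  | zero =>
    obtain rfl := h.eq_zero
    rw [T.w_eq_id, NatTrans.id_app, Category.id_comp]
  | add_one k ih => exact E.w_app_comp_ε_add_one (fun _ hj => ih hj) h
  | limit n hn _ =>
    rcases h.eq_or_lt with rfl | hlt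
    · rw [T.w_eq_id, NatTrans.id_app, Category.id_comp]
    · exact E.ε_limit n hn m hlt

lemma naturality_comp_ε {G : C ⥤ C} {m n : Ordinal.{v}} (φ : G ⟶ T.Fo m) (h : m ≤ n) {X : C}
    (f : X ⟶ A) :
    φ.app X ≫ (T.w h).app X ≫ (T.Fo n).map f ≫ E.ε n = G.map f ≫ φ.app A ≫ E.ε m := by
  rw [← NatTrans.naturality_assoc, E.w_app_comp_ε, ← NatTrans.naturality_assoc]

end TermEval

lemma CategoryTheory.RegularEpi.exists_eq_comp_iff {X Y Z : C} {e : X ⟶ Y} (he : RegularEpi e)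
    (g : X ⟶ Z) :
    (∃ h : Y ⟶ Z, g = e ≫ h) ↔ he.left ≫ g = he.right ≫ g := by
  constructor
  · rintro ⟨h, rfl⟩
    rw [he.w_assoc]
  · intro hg
    exact ⟨Cofork.IsColimit.desc he.isColimit g hg,
      (Cofork.IsColimit.π_desc' he.isColimit g hg).symm⟩

section CoyonedaSigma

open Opposite

variable [HasColimits C] {X W : C} {H : C ⥤ C}

/-- The functor `coyoneda.obj (op X) ⋙ sigmaConst.obj W` is `A ↦ ∐_{f : X ⟶ A} W`. -/
noncomputable def coyonedaSigmaDesc (l : W ⟶ H.obj X) :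
    coyoneda.obj (op X) ⋙ sigmaConst.obj W ⟶ H where
  app A := Sigma.desc fun f => l ≫ H.map f
  naturality A B g := Sigma.hom_ext _ _ fun f => by simp

lemma ι_coyonedaSigmaDesc_app_assoc (l : W ⟶ H.obj X) {A Z : C} (f : X ⟶ A) (k : H.obj A ⟶ Z) :
    Sigma.ι (fun _ : X ⟶ A => W) f ≫ (coyonedaSigmaDesc l).app A ≫ k = l ≫ H.map f ≫ k :=
  (Sigma.ι_desc_assoc (fun f => l ≫ H.map f) f k).trans (Category.assoc _ _ _)

lemma coyonedaSigmaDesc_app_comp_eq_iff (l r : W ⟶ H.obj X) {A Z : C} (k : H.obj A ⟶ Z) :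
    (coyonedaSigmaDesc l).app A ≫ k = (coyonedaSigmaDesc r).app A ≫ k ↔
      ∀ f : X ⟶ A, l ≫ H.map f ≫ k = r ≫ H.map f ≫ k := by
  constructor
  · intro hk f
    simpa only [ι_coyonedaSigmaDesc_app_assoc] using Sigma.ι (fun _ : X ⟶ A => W) f ≫= hk
  · intro hk
    refine Sigma.hom_ext _ _ fun f => ?_
    exact (ι_coyonedaSigmaDesc_app_assoc l f k).trans
      ((hk f).trans (ι_coyonedaSigmaDesc_app_assoc r f k).symm)

end CoyonedaSigma

section Translations

variable {F : C ⥤ C} {T : TermConstruction F}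
  (Ev : ∀ (A : C) (α : F.obj A ⟶ A), TermEval F T A α)

lemma satisfiesEqArrow_iff (e : EqArrow T) (A : C) (α : F.obj A ⟶ A) :
    SatisfiesEqArrow Ev e A α ↔ ∀ f : e.X ⟶ A,
      e.regEpi.left ≫ (T.Fo e.n).map f ≫ (Ev A α).ε e.n =
        e.regEpi.right ≫ (T.Fo e.n).map f ≫ (Ev A α).ε e.n :=
  forall_congr' fun _ => e.regEpi.exists_eq_comp_iff _

variable [HasColimits C]

noncomputable def EqArrow.toNatIdentity (e : EqArrow T) : NatIdentity T where
  G := coyoneda.obj (Opposite.op e.X) ⋙ sigmaConst.obj e.regEpi.W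
  m := e.n
  m' := e.n
  φ := coyonedaSigmaDesc e.regEpi.left
  ψ := coyonedaSigmaDesc e.regEpi.right

lemma satisfiesNatIdentity_toNatIdentity_iff (e : EqArrow T) (A : C) (α : F.obj A ⟶ A) :
    SatisfiesNatIdentity Ev e.toNatIdentity A α ↔ SatisfiesEqArrow Ev e A α :=
  (coyonedaSigmaDesc_app_comp_eq_iff _ _ _).trans (satisfiesEqArrow_iff Ev e A α).symm

noncomputable def NatIdentity.toEqArrow (i : NatIdentity T) (X : C) : EqArrow T where
  n := i.m ⊔ i.m'
  X := X
  tgt := coequalizer (i.φ.app X ≫ (T.w le_sup_left).app X) (i.ψ.app X ≫ (T.w le_sup_right).app X)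
  e := coequalizer.π _ _
  regEpi := coequalizerRegular _ _

lemma satisfiesEqArrow_toEqArrow_iff (i : NatIdentity T) (X A : C) (α : F.obj A ⟶ A) :
    SatisfiesEqArrow Ev (i.toEqArrow X) A α ↔ ∀ f : X ⟶ A,
      i.G.map f ≫ i.φ.app A ≫ (Ev A α).ε i.m = i.G.map f ≫ i.ψ.app A ≫ (Ev A α).ε i.m' := by
  rw [satisfiesEqArrow_iff]
  refine forall_congr' fun (f : X ⟶ A) => ?_
  change (i.φ.app X ≫ (T.w le_sup_left).app X) ≫ (T.Fo (i.m ⊔ i.m')).map f ≫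
      (Ev A α).ε (i.m ⊔ i.m') = (i.ψ.app X ≫ (T.w le_sup_right).app X) ≫
      (T.Fo (i.m ⊔ i.m')).map f ≫ (Ev A α).ε (i.m ⊔ i.m') ↔ _
  rw [Category.assoc, Category.assoc, (Ev A α).naturality_comp_ε, (Ev A α).naturality_comp_ε]

lemma forall_satisfiesEqArrow_toEqArrow_iff (i : NatIdentity T) (A : C) (α : F.obj A ⟶ A) :
    (∀ X : C, SatisfiesEqArrow Ev (i.toEqArrow X) A α) ↔ SatisfiesNatIdentity Ev i A α := by
  simp only [satisfiesEqArrow_toEqArrow_iff, SatisfiesNatIdentity]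
  constructor
  · intro h
    simpa using h A (𝟙 A)
  · intro h X f
    rw [h]

end Translations

/-- Equational classes of `F`-algebras coincide with naturally induced classes: a class `S` of
`F`-algebras is induced by a class of equation arrows iff it is induced by a class of natural
identities. -/
theorem equational_iff_naturally_induced [HasColimits C] (F : C ⥤ C)
    (T : TermConstruction F)
    (Ev : ∀ (A : C) (α : F.obj A ⟶ A), TermEval F T A α)
    (S : ∀ A : C, (F.obj A ⟶ A) → Prop) :
    (∃ 𝓔 : Set (EqArrow T), ∀ (A : C) (α : F.obj A ⟶ A),
        S A α ↔ ∀ e ∈ 𝓔, SatisfiesEqArrow Ev e A α) ↔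
      (∃ 𝓘 : Set (NatIdentity T), ∀ (A : C) (α : F.obj A ⟶ A),
        S A α ↔ ∀ i ∈ 𝓘, SatisfiesNatIdentity Ev i A α) := by
  constructor
  · rintro ⟨𝓔, h𝓔⟩
    refine ⟨EqArrow.toNatIdentity '' 𝓔, fun A α => (h𝓔 A α).trans ?_⟩
    simp only [Set.forall_mem_image, satisfiesNatIdentity_toNatIdentity_iff]
  · rintro ⟨𝓘, h𝓘⟩
    refine ⟨Set.range fun p : 𝓘 × C => p.1.1.toEqArrow p.2, fun A α => (h𝓘 A α).trans ?_⟩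
    simp only [Set.forall_mem_range, Prod.forall, Subtype.forall,
      ← forall_satisfiesEqArrow_toEqArrow_iff]
end

section
/- Let F, G be endofunctors on a cocomplete category C both preserving colimits of λ-chains, and ρ : G → F_λ a natural transformation. Define ρ_1 = [ρ, η^F] : G_1 = G + Id → F_λ and ρ_{k+1} = [μ^F ∘ ρ F_λ ∘ G ρ_k, η^F] : G_{k+1} = G G_k + Id → F_λ, extended by colimits at limit ordinals. Then for all ordinals j ≤ k, ρ_k ∘ w^G_{j,k} = ρ_j, where w^G are the connecting maps of the free-algebra construction for G. -/
open CategoryTheory CategoryTheory.Limits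

universe v u

/-- The chain construction extending a natural transformation `ρ : G ⟶ F_λ` to
transformations `ρ_k : G_k ⟶ F_λ` on the term functors of `G`:  `ρ₁ = [ρ, η]`,
`ρ_{k+1} = [μ ∘ ρ F_λ ∘ G ρ_k, η]` (where `η = ι_λ` is the unit and `μ` the multiplication of
the free monad on `F`), with colimits at limit ordinals. -/
structure ChainExtension {C : Type u} [Category.{v} C] (F G : C ⥤ C)
    (TF : TermConstruction F) (TG : TermConstruction G) (l : Ordinal.{v})
    (μ : TF.Fo l ⋙ TF.Fo l ⟶ TF.Fo l) (ρ : G ⟶ TF.Fo l) where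
  ρo : ∀ k : Ordinal.{v}, TG.Fo k ⟶ TF.Fo l
  ρo_ι : ∀ k : Ordinal.{v}, TG.ι k ≫ ρo k = TF.ι l
  ρo_one : ∀ A : C,
      G.map ((TG.ι 0).app A) ≫ (TG.q 0).app A ≫ (ρo (0 + 1)).app A = ρ.app A
  ρo_succ : ∀ (k : Ordinal.{v}) (A : C),
      (TG.q k).app A ≫ (ρo (k + 1)).app A =
        G.map ((ρo k).app A) ≫ ρ.app ((TF.Fo l).obj A) ≫ μ.app A
  ρo_limit : ∀ (k : Ordinal.{v}), Order.IsSuccLimit k → ∀ (j : Ordinal.{v}) (h : j < k),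
      TG.w h.le ≫ ρo k = ρo j

/-!
Induct on the lower index `j`, for all `k` at once. For `j = 0` both sides agree after the
isomorphism `ι₀`, since every `ρ_k` restricts to `η` along `ι_k`. For `j = i + 1` and
`k = m + 1`, the two coproduct summands of `G_{i+1} = G G_i + Id` are compared separately, and
`q_w` reduces the `G G_i` summand to the case `(i, m)`; a limit `k` is the defining equation of
`ρ_k`. For limit `j`, both sides are determined by their restrictions to the `G_i`, `i < j`.
-/

namespace TermConstruction

variable {C : Type u} [Category.{v} C] {F : C ⥤ C} (T : TermConstruction F) {H : C ⥤ C}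

theorem hom_ext_zero_s13 {f g : T.Fo 0 ⟶ H} (hι : T.ι 0 ≫ f = T.ι 0 ≫ g) : f = g :=
  haveI := T.iso0
  (cancel_epi (T.ι 0)).1 hι

theorem hom_ext_add_one_s13 {n : Ordinal.{v}} {f g : T.Fo (n + 1) ⟶ H}
    (hq : T.q n ≫ f = T.q n ≫ g) (hι : T.ι (n + 1) ≫ f = T.ι (n + 1) ≫ g) : f = g := by
  ext A
  exact BinaryCofan.IsColimit.hom_ext (T.succ_isColimit n A).some
    (NatTrans.congr_app hq A) (NatTrans.congr_app hι A)

theorem hom_ext_of_isSuccLimit_s13 {n : Ordinal.{v}} (hn : Order.IsSuccLimit n) {f g : T.Fo n ⟶ H}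
    (hw : ∀ m (hm : m < n), T.w hm.le ≫ f = T.w hm.le ≫ g) : f = g := by
  ext A
  have compat : ∀ (m m' : Ordinal.{v}) (h : m ≤ m') (h' : m' < n),
      (T.w h).app A ≫ (T.w h'.le).app A ≫ f.app A = (T.w (h.trans_lt h').le).app A ≫ f.app A := by
    intro m m' h h'
    rw [← Category.assoc, ← NatTrans.comp_app, T.w_trans]
  obtain ⟨_, -, huniq⟩ := T.limit_exists_unique n hn A (H.obj A)
    (fun m hm => (T.w hm.le).app A ≫ f.app A) compat
  refine (huniq _ fun m hm => rfl).trans (huniq _ fun m hm => ?_).symm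
  exact (NatTrans.congr_app (hw m hm) A).symm

end TermConstruction

namespace ChainExtension

variable {C : Type u} [Category.{v} C] {F G : C ⥤ C} {TF : TermConstruction F}
  {TG : TermConstruction G} {l : Ordinal.{v}} {μ : TF.Fo l ⋙ TF.Fo l ⟶ TF.Fo l}
  {ρ : G ⟶ TF.Fo l} (R : ChainExtension F G TF TG l μ ρ)

theorem q_comp_ρo_add_one (k : Ordinal.{v}) :
    TG.q k ≫ R.ρo (k + 1) =
      Functor.whiskerRight (R.ρo k) G ≫ Functor.whiskerLeft (TF.Fo l) ρ ≫ μ := by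
  ext A
  exact R.ρo_succ k A

theorem w_comp_ρo_zero {k : Ordinal.{v}} (h : 0 ≤ k) : TG.w h ≫ R.ρo k = R.ρo 0 :=
  TG.hom_ext_zero_s13 (by rw [← Category.assoc, TG.ι_w, R.ρo_ι, R.ρo_ι])

theorem w_comp_ρo_add_one {i m : Ordinal.{v}} (h : i ≤ m) (h' : i + 1 ≤ m + 1)
    (hρ : TG.w h ≫ R.ρo m = R.ρo i) : TG.w h' ≫ R.ρo (m + 1) = R.ρo (i + 1) := by
  refine TG.hom_ext_add_one_s13 ?_ (by rw [← Category.assoc, TG.ι_w, R.ρo_ι, R.ρo_ι])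
  calc TG.q i ≫ TG.w h' ≫ R.ρo (m + 1)
      = Functor.whiskerRight (TG.w h) G ≫ TG.q m ≫ R.ρo (m + 1) := by
        rw [← Category.assoc, ← TG.q_w h, Category.assoc]
    _ = Functor.whiskerRight (TG.w h ≫ R.ρo m) G ≫ Functor.whiskerLeft (TF.Fo l) ρ ≫ μ := by
        rw [q_comp_ρo_add_one, Functor.whiskerRight_comp, Category.assoc]
    _ = TG.q i ≫ R.ρo (i + 1) := by rw [hρ, q_comp_ρo_add_one]

theorem w_comp_ρo_of_isSuccLimit {j k : Ordinal.{v}} (hj : Order.IsSuccLimit j) (h : j ≤ k)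
    (hlt : ∀ i < j, ∀ hik : i ≤ k, TG.w hik ≫ R.ρo k = R.ρo i) :
    TG.w h ≫ R.ρo k = R.ρo j :=
  TG.hom_ext_of_isSuccLimit_s13 hj fun i hi => by
    rw [← Category.assoc, TG.w_trans, hlt i hi, R.ρo_limit j hj i hi]

end ChainExtension

theorem chainExtension_comp_w_general {C : Type u} [Category.{v} C] (F G : C ⥤ C)
    (TF : TermConstruction F) (TG : TermConstruction G) (l : Ordinal.{v})
    (μ : TF.Fo l ⋙ TF.Fo l ⟶ TF.Fo l) (ρ : G ⟶ TF.Fo l)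
    (R : ChainExtension F G TF TG l μ ρ)
    {j k : Ordinal.{v}} (h : j ≤ k) :
    TG.w h ≫ R.ρo k = R.ρo j := by
  induction j using WellFoundedLT.induction generalizing k with
  | _ j IH =>
  rcases Ordinal.zero_or_succ_or_isSuccLimit j with rfl | ⟨i, hi⟩ | hj
  · exact R.w_comp_ρo_zero h
  · obtain rfl : j = i + 1 := by rw [← hi, Order.succ_eq_add_one]
    rcases Ordinal.zero_or_succ_or_isSuccLimit k with rfl | ⟨m, hm⟩ | hk
    · exact absurd h (by simp)
    · obtain rfl : k = m + 1 := by rw [← hm, Order.succ_eq_add_one]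
      have him : i ≤ m := by simpa using h
      exact R.w_comp_ρo_add_one him h (IH i (lt_add_one i) him)
    · exact R.ρo_limit k hk (i + 1) (hk.add_one_lt ((lt_add_one i).trans_le h))
  · exact R.w_comp_ρo_of_isSuccLimit hj h fun i hi => IH i hi

/-- For the chain construction `ρ_k : G_k ⟶ F_λ` extending `ρ : G ⟶ F_λ`, one has
`ρ_k ∘ w^G_{j,k} = ρ_j` for all ordinals `j ≤ k`. -/
theorem chainExtension_comp_w {C : Type u} [Category.{v} C] [HasColimits C] (F G : C ⥤ C)
    (TF : TermConstruction F) (TG : TermConstruction G) (l : Ordinal.{v}) (hl : Order.IsSuccLimit l)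
    [PreservesColimitsOfShape {m : Ordinal.{v} // m < l} F]
    [PreservesColimitsOfShape {m : Ordinal.{v} // m < l} G]
    (μ : TF.Fo l ⋙ TF.Fo l ⟶ TF.Fo l) (ρ : G ⟶ TF.Fo l)
    (R : ChainExtension F G TF TG l μ ρ)
    {j k : Ordinal.{v}} (h : j ≤ k) :
    TG.w h ≫ R.ρo k = R.ρo j :=
  chainExtension_comp_w_general F G TF TG l μ ρ R h
end

section
/- With ρ : G → F_λ and ρ_k : G_k → F_λ defined as in the chain construction (ρ_1 = [ρ, η^F], ρ_{k+1} = [μ^F ∘ ρ F_λ ∘ G ρ_k, η^F], colimits at limit steps), the transformation ρ_λ : G_λ → F_λ is a morphism of G-algebras componentwise: for every object A, ρ_{λ,A} : (G_λ A, υ^G_A) → (F_λ A, β_A) is a G-algebra morphism, where β = μ^F ∘ ρ F_λ. -/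
/-!
Since `G` preserves the colimit `G_λ A = colim_{n<λ} Gₙ A`, the two sides of the algebra square
agree once they agree after precomposition with every `G (w_{n,λ})`. There `υ` restricts to the
injection `q_n` followed by `w_{n+1,λ}` (and `n + 1 < λ` as `λ` is a limit), `ρ_λ` restricts to
`ρ_{n+1}` on `G_{n+1}` and to `ρ_n` on `Gₙ`, and the successor clause of the chain construction,
`q_n ≫ ρ_{n+1} = G ρ_n ≫ β`, is exactly the square restricted to `G Gₙ A`.
-/

open CategoryTheory CategoryTheory.Limits

universe v u

namespace TermConstruction

variable {C : Type u} [Category.{v} C] {G : C ⥤ C} (TG : TermConstruction G)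
  (l : Ordinal.{v}) (A : C)

def chain : {m : Ordinal.{v} // m < l} ⥤ C where
  obj m := (TG.Fo m.1).obj A
  map f := (TG.w (leOfHom f)).app A
  map_id m := by rw [TG.w_refl]; rfl
  map_comp f g := by rw [← NatTrans.comp_app, TG.w_trans]

def chainCocone : Cocone (TG.chain l A) where
  pt := (TG.Fo l).obj A
  ι :=
    { app := fun m => (TG.w m.2.le).app A
      naturality := fun _ m' f => by
        simp only [chain, Functor.const_obj_obj, Functor.const_obj_map, Category.comp_id]
        rw [← NatTrans.comp_app, TG.w_trans (leOfHom f) m'.2.le] }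

noncomputable def isColimitChainCocone (hl : Order.IsSuccLimit l) :
    IsColimit (TG.chainCocone l A) := by
  have exists_unique_desc : ∀ s : Cocone (TG.chain l A),
      ∃! k : (TG.Fo l).obj A ⟶ s.pt,
        ∀ (m : Ordinal.{v}) (h : m < l), (TG.w h.le).app A ≫ k = s.ι.app ⟨m, h⟩ := fun s =>
    TG.limit_exists_unique l hl A s.pt (fun m h => s.ι.app ⟨m, h⟩) fun m m' h h' =>
      s.w (homOfLE h : (⟨m, h.trans_lt h'⟩ : {m : Ordinal.{v} // m < l}) ⟶ ⟨m', h'⟩)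
  exact
    { desc := fun s => (exists_unique_desc s).choose
      fac := fun s m => (exists_unique_desc s).choose_spec.1 m.1 m.2
      uniq := fun s k hk => (exists_unique_desc s).choose_spec.2 k fun m h => hk ⟨m, h⟩ }

end TermConstruction

namespace ChainExtension

variable {C : Type u} [Category.{v} C] {F G : C ⥤ C} {TF : TermConstruction F}
  {TG : TermConstruction G} {l : Ordinal.{v}} {μ : TF.Fo l ⋙ TF.Fo l ⟶ TF.Fo l}
  {ρ : G ⟶ TF.Fo l} (R : ChainExtension F G TF TG l μ ρ)

theorem w_app_ρo_app {k j : Ordinal.{v}} (hk : Order.IsSuccLimit k) (h : j < k) (A : C) :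
    (TG.w h.le).app A ≫ (R.ρo k).app A = (R.ρo j).app A := by
  rw [← NatTrans.comp_app, R.ρo_limit k hk j h]

theorem ρo_succ_of_lt {n : Ordinal.{v}} (hl : Order.IsSuccLimit l) (hn : n < l) (A : C) :
    (TG.q n).app A ≫ (R.ρo (n + 1)).app A =
      G.map ((TG.w hn.le).app A) ≫
        G.map ((R.ρo l).app A) ≫ ρ.app ((TF.Fo l).obj A) ≫ μ.app A := by
  rw [← Category.assoc, ← G.map_comp, R.w_app_ρo_app hl hn, R.ρo_succ]

end ChainExtension

theorem chainExtension_is_algebra_morphism_general {C : Type u} [Category.{v} C]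
    (F G : C ⥤ C) (TF : TermConstruction F) (TG : TermConstruction G)
    (l : Ordinal.{v}) (hl : Order.IsSuccLimit l)
    [PreservesColimitsOfShape {m : Ordinal.{v} // m < l} G]
    (μ : TF.Fo l ⋙ TF.Fo l ⟶ TF.Fo l) (ρ : G ⟶ TF.Fo l)
    (R : ChainExtension F G TF TG l μ ρ)
    (υG : TG.Fo l ⋙ G ⟶ TG.Fo l)
    (hυG : ∀ (n : Ordinal.{v}) (hn : n < l) (hn1 : n + 1 ≤ l) (A : C),
      G.map ((TG.w hn.le).app A) ≫ υG.app A = (TG.q n).app A ≫ (TG.w hn1).app A)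
    (A : C) :
    υG.app A ≫ (R.ρo l).app A =
      G.map ((R.ρo l).app A) ≫ ρ.app ((TF.Fo l).obj A) ≫ μ.app A := by
  refine (isColimitOfPreserves G (TG.isColimitChainCocone l A hl)).hom_ext
    fun ⟨n, hn⟩ => ?_
  have hn1 : n + 1 < l := Order.succ_eq_add_one n ▸ hl.succ_lt hn
  change G.map ((TG.w hn.le).app A) ≫ _ = G.map ((TG.w hn.le).app A) ≫ _
  rw [← R.ρo_succ_of_lt hl hn, ← Category.assoc, hυG n hn hn1.le,
    Category.assoc, R.w_app_ρo_app hl hn1]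

/-- The transformation `ρ_λ : G_λ ⟶ F_λ` obtained by the chain construction is componentwise a
morphism of `G`-algebras: for every object `A`,
`ρ_{λ,A} : (G_λ A, υ^G_A) ⟶ (F_λ A, β_A)` is a `G`-algebra morphism, where `β = μ ∘ ρ F_λ`. -/
theorem chainExtension_is_algebra_morphism {C : Type u} [Category.{v} C] [HasColimits C]
    (F G : C ⥤ C) (TF : TermConstruction F) (TG : TermConstruction G)
    (l : Ordinal.{v}) (hl : Order.IsSuccLimit l)
    [PreservesColimitsOfShape {m : Ordinal.{v} // m < l} F]
    [PreservesColimitsOfShape {m : Ordinal.{v} // m < l} G]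
    (μ : TF.Fo l ⋙ TF.Fo l ⟶ TF.Fo l) (ρ : G ⟶ TF.Fo l)
    (R : ChainExtension F G TF TG l μ ρ)
    (υG : TG.Fo l ⋙ G ⟶ TG.Fo l)
    (hυG : ∀ (n : Ordinal.{v}) (hn : n < l) (hn1 : n + 1 ≤ l) (A : C),
      G.map ((TG.w hn.le).app A) ≫ υG.app A = (TG.q n).app A ≫ (TG.w hn1).app A)
    (A : C) :
    υG.app A ≫ (R.ρo l).app A =
      G.map ((R.ρo l).app A) ≫ ρ.app ((TF.Fo l).obj A) ≫ μ.app A :=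
  chainExtension_is_algebra_morphism_general F G TF TG l hl μ ρ R υG hυG A
end

section
/- Given a monad M = (M, η, μ) on a cocomplete category C, the Eilenberg–Moore category of M-algebras is concretely isomorphic over C to the naturally induced class Alg(M, {(q_0 ∘ η, id_Id), (q_1 ∘ M q_0, q_0 ∘ μ)}): an M-algebra structure α : M A → A (as an algebra for the endofunctor M) satisfies α ∘ η_A = id_A and α ∘ μ_A = α ∘ M α if and only if it satisfies the two natural identities (q_0 ∘ η : Id → M_1, id : Id → M_0) and (q_1 ∘ M q_0 : M² → M_2, q_0 ∘ μ : M² → M_1). -/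
open CategoryTheory CategoryTheory.Limits

universe v u

namespace TermEval

variable {C : Type u} [Category.{v} C] {F : C ⥤ C} {T : TermConstruction F} {A : C}
  {α : F.obj A ⟶ A} (E : TermEval F T A α)

theorem map_ι_zero_q_zero_ε_one :
    F.map ((T.ι 0).app A) ≫ (T.q 0).app A ≫ E.ε (0 + 1) = α := by
  rw [E.ε_succ_q, ← F.map_comp_assoc, E.ε_zero]
  simp only [Functor.id_obj, CategoryTheory.Functor.map_id, Category.id_comp]

theorem map_q_zero_q_one_ε_two :
    F.map (F.map ((T.ι 0).app A) ≫ (T.q 0).app A) ≫ (T.q (0 + 1)).app A ≫ E.ε (0 + 1 + 1) =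
      F.map α ≫ α := by
  rw [E.ε_succ_q, ← F.map_comp_assoc, Category.assoc, E.map_ι_zero_q_zero_ε_one]

end TermEval

theorem eilenbergMoore_iff_satisfies_identities_general {C : Type u} [Category.{v} C]
    (M : Monad C) (T : TermConstruction (M : C ⥤ C))
    (A : C) (α : (M : C ⥤ C).obj A ⟶ A) (E : TermEval (M : C ⥤ C) T A α) :
    (M.η.app A ≫ α = 𝟙 A ∧ M.μ.app A ≫ α = (M : C ⥤ C).map α ≫ α) ↔
      ((M.η.app A ≫ (M : C ⥤ C).map ((T.ι 0).app A) ≫ (T.q 0).app A) ≫ E.ε (0 + 1) =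
          (T.ι 0).app A ≫ E.ε 0 ∧
        ((M : C ⥤ C).map ((M : C ⥤ C).map ((T.ι 0).app A) ≫ (T.q 0).app A) ≫
            (T.q (0 + 1)).app A) ≫ E.ε (0 + 1 + 1) =
          (M.μ.app A ≫ (M : C ⥤ C).map ((T.ι 0).app A) ≫ (T.q 0).app A) ≫ E.ε (0 + 1)) := by
  simp only [Category.assoc, E.map_ι_zero_q_zero_ε_one, E.map_q_zero_q_one_ε_two, E.ε_zero]
  exact and_congr_right' eq_comm

/-- The Eilenberg–Moore algebras of a monad `(M, η, μ)` are exactly the algebras for the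
endofunctor `M` satisfying the two natural identities `(q₀ ∘ η : Id ⟶ M₁, id : Id ⟶ M₀)` and
`(q₁ ∘ M q₀ : M² ⟶ M₂, q₀ ∘ μ : M² ⟶ M₁)` (components written via the isomorphism
`ι 0 : Id ⟶ M₀`): a structure map `α : M A ⟶ A` satisfies `α ∘ η_A = id` and
`α ∘ μ_A = α ∘ M α` iff it satisfies the two natural identities. -/
theorem eilenbergMoore_iff_satisfies_identities {C : Type u} [Category.{v} C] [HasColimits C]
    (M : Monad C) (T : TermConstruction (M : C ⥤ C))
    (A : C) (α : (M : C ⥤ C).obj A ⟶ A) (E : TermEval (M : C ⥤ C) T A α) :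
    (M.η.app A ≫ α = 𝟙 A ∧ M.μ.app A ≫ α = (M : C ⥤ C).map α ≫ α) ↔
      ((M.η.app A ≫ (M : C ⥤ C).map ((T.ι 0).app A) ≫ (T.q 0).app A) ≫ E.ε (0 + 1) =
          (T.ι 0).app A ≫ E.ε 0 ∧
        ((M : C ⥤ C).map ((M : C ⥤ C).map ((T.ι 0).app A) ≫ (T.q 0).app A) ≫
            (T.q (0 + 1)).app A) ≫ E.ε (0 + 1 + 1) =
          (M.μ.app A ≫ (M : C ⥤ C).map ((T.ι 0).app A) ≫ (T.q 0).app A) ≫ E.ε (0 + 1)) :=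
  eilenbergMoore_iff_satisfies_identities_general M T A α E
end
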